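/- arXiv:2404.07670 — 4 statements merged into one kernel-verified Lean document; each statement's English description precedes it below -/
import Mathlib

section
/- Let q = 4, s ≥ 1, let v be the Helberg weight sequence v_i = 0 for i ≤ 0 and v_i = 1 + 3·∑_{j=1}^{s} v_{i−j}, and define C_{2k} = 2·v_k, C_{2k−1} = v_k. Then for every natural number L ≥ 1, C_L − ∑_{i=L−s}^{L−1} C_i ≥ 1, where C_i is taken as 0 whenever i ≤ 0. -/
/-!
Since `C (2j - 1) + C (2j) = 3 v j`, the `2s` coefficients just below `C (2k - 1)` sum to
`3 (v (k-1) + ⋯ + v (k-s)) = v k - 1`. For `L = 2k - 1` the window of `s` coefficients below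
`C L = v k` lies among them; for `L = 2k` it lies among them together with `C (2k - 1) = v k`,
while `C L = 2 v k`. Either way the window sum is at most `C L - 1`.
-/

open Finset

lemma sum_Ioc_two_mul_sub_eq_sum_range_pairs {M : Type*} [AddCommMonoid M] (f : ℤ → M)
    (n : ℕ) (m : ℤ) :
    ∑ i ∈ Ioc (2 * m - 2 * n) (2 * m), f i =
      ∑ j ∈ range n, (f (2 * (m - j) - 1) + f (2 * (m - j))) := by
  induction n generalizing m with
  | zero => simp
  | succ n ih =>
    have hIoc : Ioc (2 * m - 2 * (n + 1 : ℕ)) (2 * m) =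
        insert (2 * m) (insert (2 * m - 1) (Ioc (2 * (m - 1) - 2 * n) (2 * (m - 1)))) := by
      rw [show 2 * (m - 1) = 2 * m - 1 - 1 by ring, insert_Ioc_sub_one_right_eq_Ioc (by omega),
        insert_Ioc_sub_one_right_eq_Ioc (by omega)]
      congr 1
      push_cast
      ring
    rw [hIoc, sum_insert (by simp only [mem_insert, mem_Ioc]; omega),
      sum_insert (by simp only [mem_Ioc]; omega), ih, sum_range_succ']
    simp only [Nat.cast_add, Nat.cast_one, Nat.cast_zero, sub_zero, sub_add_eq_sub_sub,
      sub_right_comm _ _ (1 : ℤ)]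
    abel

section Helberg

variable {s : ℕ} {v C : ℤ → ℕ}

lemma sum_C_Ioc_eq_v_sub_one
    (hv : ∀ i : ℤ, 1 ≤ i → v i = 1 + 3 * ∑ j ∈ range s, v (i - 1 - j))
    (hCe : ∀ k : ℤ, C (2 * k) = 2 * v k) (hCo : ∀ k : ℤ, C (2 * k - 1) = v k)
    {k : ℤ} (hk : 1 ≤ k) :
    ∑ i ∈ Ioc (2 * (k - 1) - 2 * s) (2 * (k - 1)), (C i : ℤ) = v k - 1 := by
  rw [sum_Ioc_two_mul_sub_eq_sum_range_pairs, hv k hk]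
  simp only [hCe, hCo]
  push_cast
  rw [mul_sum]
  ring_nf

lemma sum_C_Ioc_le_v_sub_one
    (hv : ∀ i : ℤ, 1 ≤ i → v i = 1 + 3 * ∑ j ∈ range s, v (i - 1 - j))
    (hCe : ∀ k : ℤ, C (2 * k) = 2 * v k) (hCo : ∀ k : ℤ, C (2 * k - 1) = v k)
    {k a : ℤ} (hk : 1 ≤ k) (ha : 2 * (k - 1) - 2 * s ≤ a) :
    ∑ i ∈ Ioc a (2 * (k - 1)), (C i : ℤ) ≤ v k - 1 :=
  sum_C_Ioc_eq_v_sub_one hv hCe hCo hk ▸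
    sum_le_sum_of_subset_of_nonneg (Ioc_subset_Ioc_left ha) fun _ _ _ => Int.natCast_nonneg _

lemma sum_C_Ioc_le_two_mul_v_sub_one
    (hv : ∀ i : ℤ, 1 ≤ i → v i = 1 + 3 * ∑ j ∈ range s, v (i - 1 - j))
    (hCe : ∀ k : ℤ, C (2 * k) = 2 * v k) (hCo : ∀ k : ℤ, C (2 * k - 1) = v k)
    {k a : ℤ} (hk : 1 ≤ k) (ha : 2 * (k - 1) - 2 * s ≤ a) :
    ∑ i ∈ Ioc a (2 * k - 1), (C i : ℤ) ≤ 2 * v k - 1 := by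
  have hfull : ∑ i ∈ Ioc (2 * (k - 1) - 2 * s) (2 * k - 1), (C i : ℤ) = 2 * v k - 1 := by
    rw [← insert_Ioc_sub_one_right_eq_Ioc (by omega), sum_insert (by simp),
      show 2 * k - 1 - 1 = 2 * (k - 1) by ring, sum_C_Ioc_eq_v_sub_one hv hCe hCo hk, hCo]
    ring
  exact hfull ▸
    sum_le_sum_of_subset_of_nonneg (Ioc_subset_Ioc_left ha) fun _ _ _ => Int.natCast_nonneg _

end Helberg

theorem stmt_4_general (s : ℕ) (v C : ℤ → ℕ)
    (hv0 : ∀ i : ℤ, i ≤ 0 → v i = 0)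
    (hv : ∀ i : ℤ, 1 ≤ i → v i = 1 + 3 * ∑ j ∈ Finset.range s, v (i - 1 - j))
    (hC0 : ∀ i : ℤ, i ≤ 0 → C i = 0)
    (hCe : ∀ k : ℤ, 1 ≤ k → C (2 * k) = 2 * v k)
    (hCo : ∀ k : ℤ, 1 ≤ k → C (2 * k - 1) = v k) :
    ∀ L : ℤ, 1 ≤ L →
      1 ≤ (C L : ℤ) - ∑ i ∈ Finset.Icc (L - (s : ℤ)) (L - 1), (C i : ℤ) := by
  have hCe' (k : ℤ) : C (2 * k) = 2 * v k :=
    (le_or_gt k 0).elim (fun hk => by rw [hC0 _ (by omega), hv0 _ hk]) (hCe k)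
  have hCo' (k : ℤ) : C (2 * k - 1) = v k :=
    (le_or_gt k 0).elim (fun hk => by rw [hC0 _ (by omega), hv0 _ hk]) (hCo k)
  intro L hL
  rw [← Ioc_sub_one_left_eq_Icc]
  obtain ⟨k, hk, rfl | rfl⟩ : ∃ k : ℤ, 1 ≤ k ∧ (L = 2 * k - 1 ∨ L = 2 * k) :=
    ⟨(L + 1) / 2, by omega, by omega⟩
  · have hwindow := sum_C_Ioc_le_v_sub_one (a := 2 * k - 1 - s - 1) hv hCe' hCo' hk (by omega)
    rw [show 2 * k - 1 - 1 = 2 * (k - 1) by ring, hCo']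
    linarith
  · have hwindow :=
      sum_C_Ioc_le_two_mul_v_sub_one (a := 2 * k - s - 1) hv hCe' hCo' hk (by omega)
    rw [hCe']
    push_cast
    linarith

theorem stmt_4 (s : ℕ) (hs : 1 ≤ s) (v C : ℤ → ℕ)
    (hv0 : ∀ i : ℤ, i ≤ 0 → v i = 0)
    (hv : ∀ i : ℤ, 1 ≤ i → v i = 1 + 3 * ∑ j ∈ Finset.range s, v (i - 1 - j))
    (hC0 : ∀ i : ℤ, i ≤ 0 → C i = 0)
    (hCe : ∀ k : ℤ, 1 ≤ k → C (2 * k) = 2 * v k)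
    (hCo : ∀ k : ℤ, 1 ≤ k → C (2 * k - 1) = v k) :
    ∀ L : ℤ, 1 ≤ L →
      1 ≤ (C L : ℤ) - ∑ i ∈ Finset.Icc (L - (s : ℤ)) (L - 1), (C i : ℤ) :=
  stmt_4_general s v C hv0 hv hC0 hCe hCo
end

section
/- Let v be the Helberg weight sequence for q = 4, s ≥ 1, and define C_{2k} = 2·v_k, C_{2k−1} = v_k for k ≥ 1 (C_i = 0 for i ≤ 0). Then for every even L ≥ 2, v_{L/2} = 1 + ∑_{i = L−2s−1}^{L−2} C_i, where terms with nonpositive index are 0. -/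
/-!
Writing `L = 2m`, the window `[L - 2s - 1, L - 2]` splits into the `s` consecutive pairs
`{2k - 1, 2k}` with `k = m - 1 - j`, `j < s`, and each pair contributes `C (2k - 1) + C (2k) = 3 v k`
(also for `k ≤ 0`, where both sides vanish). Hence the right-hand side is
`1 + 3 (v (m-1) + ⋯ + v (m-s)) = v m`.
-/

open Finset

theorem sum_Ioc_sub_two_mul_eq_sum_range_pairs {M : Type*} [AddCommMonoid M] (f : ℤ → M)
    (n : ℤ) (t : ℕ) :
    ∑ i ∈ Ioc (n - 2 * t) n, f i = ∑ j ∈ range t, (f (n - 2 * j - 1) + f (n - 2 * j)) := by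
  induction t with
  | zero => simp
  | succ t ih =>
    have hsplit : Ioc (n - 2 * ↑(t + 1)) n =
        insert (n - 2 * t - 1) (insert (n - 2 * t) (Ioc (n - 2 * t) n)) := by
      ext i; simp only [mem_Ioc, mem_insert]; omega
    rw [hsplit, sum_insert (by simp only [mem_Ioc, mem_insert]; omega),
      sum_insert (by simp), ih, sum_range_succ, ← add_assoc, add_comm]

theorem forall_comp_eq_mul_of_nonpos_eq_zero {v C : ℤ → ℕ} (g : ℤ → ℤ) (c : ℕ)
    (hv0 : ∀ i : ℤ, i ≤ 0 → v i = 0) (hC0 : ∀ i : ℤ, i ≤ 0 → C i = 0)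
    (hg : ∀ k, k ≤ 0 → g k ≤ 0) (hC : ∀ k : ℤ, 1 ≤ k → C (g k) = c * v k) (k : ℤ) :
    C (g k) = c * v k := by
  rcases le_or_gt 1 k with hk | hk
  · exact hC k hk
  · rw [hC0 _ (hg k (by omega)), hv0 _ (by omega), mul_zero]

theorem stmt_8_general (s : ℕ) (v C : ℤ → ℕ)
    (hv0 : ∀ i : ℤ, i ≤ 0 → v i = 0)
    (hv : ∀ i : ℤ, 1 ≤ i → v i = 1 + 3 * ∑ j ∈ Finset.range s, v (i - 1 - j))
    (hC0 : ∀ i : ℤ, i ≤ 0 → C i = 0)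
    (hCe : ∀ k : ℤ, 1 ≤ k → C (2 * k) = 2 * v k)
    (hCo : ∀ k : ℤ, 1 ≤ k → C (2 * k - 1) = v k) :
    ∀ L : ℤ, 2 ≤ L → Even L →
      v (L / 2) = 1 + ∑ i ∈ Finset.Icc (L - 2 * (s : ℤ) - 1) (L - 2), C i := by
  rintro L hL ⟨m, rfl⟩
  have hCe' : ∀ k, C (2 * k) = 2 * v k :=
    forall_comp_eq_mul_of_nonpos_eq_zero (2 * ·) 2 hv0 hC0 (by intros; omega) hCe
  have hCo' : ∀ k, C (2 * k - 1) = 1 * v k :=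
    forall_comp_eq_mul_of_nonpos_eq_zero (2 * · - 1) 1 hv0 hC0 (by intros; omega)
      (by simpa using hCo)
  have hwindow : Icc (m + m - 2 * s - 1) (m + m - 2) =
      Ioc (2 * (m - 1) - 2 * s) (2 * (m - 1)) := by
    ext i; simp only [mem_Icc, mem_Ioc]; omega
  rw [show (m + m) / 2 = m by omega, hv m (by omega), hwindow,
    sum_Ioc_sub_two_mul_eq_sum_range_pairs, mul_sum]
  congr 1
  refine sum_congr rfl fun j _ => ?_
  rw [show 2 * (m - 1) - 2 * (j : ℤ) = 2 * (m - 1 - j) by ring, hCo', hCe']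
  ring

theorem stmt_8 (s : ℕ) (hs : 1 ≤ s) (v C : ℤ → ℕ)
    (hv0 : ∀ i : ℤ, i ≤ 0 → v i = 0)
    (hv : ∀ i : ℤ, 1 ≤ i → v i = 1 + 3 * ∑ j ∈ Finset.range s, v (i - 1 - j))
    (hC0 : ∀ i : ℤ, i ≤ 0 → C i = 0)
    (hCe : ∀ k : ℤ, 1 ≤ k → C (2 * k) = 2 * v k)
    (hCo : ∀ k : ℤ, 1 ≤ k → C (2 * k - 1) = v k) :
    ∀ L : ℤ, 2 ≤ L → Even L →
      v (L / 2) = 1 + ∑ i ∈ Finset.Icc (L - 2 * (s : ℤ) - 1) (L - 2), C i :=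
  stmt_8_general s v C hv0 hv hC0 hCe hCo
end

section
/- Let v be the Helberg weight sequence for q = 4, s ≥ 1, and define C_{2k} = 2·v_k, C_{2k−1} = v_k for k ≥ 1 (C_i = 0 for i ≤ 0). Then for every odd L ≥ 1, v_{(L+1)/2} = 1 + ∑_{i = L−2s}^{L−1} C_i, where terms with nonpositive index are 0. -/
/-!
Group the `2s` coefficients `C_{L-2s}, …, C_{L-1}` into the `s` consecutive pairs
`C_{2k-1} + C_{2k} = 3 v_k` (also for `k ≤ 0`, where all three vanish). The sum becomes
`3 (v_{m-s} + … + v_{m-1})` with `m = (L+1)/2`, which is `v_m - 1` by the recursion.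
-/

open Finset

theorem Finset.sum_Icc_two_mul_sub_one_eq_sum_pairs {M : Type*} [AddCommMonoid M]
    (f : ℤ → M) (m : ℤ) (t : ℕ) :
    ∑ i ∈ Icc (2 * m - 1) (2 * m - 2 + 2 * (t : ℤ)), f i
      = ∑ j ∈ range t, (f (2 * (m + j) - 1) + f (2 * (m + j))) := by
  induction t with
  | zero => simp
  | succ t ih =>
    have hIcc : Icc (2 * m - 1) (2 * m - 2 + 2 * ((t + 1 : ℕ) : ℤ))
        = insert (2 * (m + t)) (insert (2 * (m + t) - 1)
            (Icc (2 * m - 1) (2 * m - 2 + 2 * (t : ℤ)))) := by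
      ext x
      simp only [mem_Icc, mem_insert]
      omega
    rw [hIcc, sum_insert (by simp only [mem_insert, mem_Icc]; omega),
      sum_insert (by simp only [mem_Icc]; omega), ih, sum_range_succ]
    abel

theorem Finset.sum_range_sub_eq_sum_range_add {M : Type*} [AddCommMonoid M]
    (f : ℤ → M) (k : ℤ) (s : ℕ) :
    ∑ j ∈ range s, f (k - j) = ∑ j ∈ range s, f (k + 1 - s + j) := by
  rw [← sum_range_reflect]
  refine sum_congr rfl fun j hj => congrArg f ?_
  have := mem_range.mp hj
  omega

theorem stmt_9_general (s : ℕ) (v C : ℤ → ℕ)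
    (hv0 : ∀ i : ℤ, i ≤ 0 → v i = 0)
    (hv : ∀ i : ℤ, 1 ≤ i → v i = 1 + 3 * ∑ j ∈ Finset.range s, v (i - 1 - j))
    (hC0 : ∀ i : ℤ, i ≤ 0 → C i = 0)
    (hCe : ∀ k : ℤ, 1 ≤ k → C (2 * k) = 2 * v k)
    (hCo : ∀ k : ℤ, 1 ≤ k → C (2 * k - 1) = v k) :
    ∀ L : ℤ, 1 ≤ L → Odd L →
      v ((L + 1) / 2) = 1 + ∑ i ∈ Finset.Icc (L - 2 * (s : ℤ)) (L - 1), C i := by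
  have hpair (k : ℤ) : C (2 * k - 1) + C (2 * k) = 3 * v k := by
    rcases le_or_gt k 0 with hk | hk
    · rw [hC0 _ (by omega), hC0 _ (by omega), hv0 _ hk]
    · rw [hCo _ hk, hCe _ hk]; ring
  rintro L hL ⟨k, rfl⟩
  rw [show (2 * k + 1 + 1) / 2 = k + 1 by omega, hv (k + 1) (by omega),
    show 2 * k + 1 - 2 * (s : ℤ) = 2 * (k + 1 - s) - 1 by ring,
    show 2 * k + 1 - 1 = 2 * (k + 1 - s) - 2 + 2 * (s : ℤ) by ring,
    sum_Icc_two_mul_sub_one_eq_sum_pairs]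
  simp only [hpair, add_sub_cancel_right]
  rw [← mul_sum, sum_range_sub_eq_sum_range_add]

theorem stmt_9 (s : ℕ) (hs : 1 ≤ s) (v C : ℤ → ℕ)
    (hv0 : ∀ i : ℤ, i ≤ 0 → v i = 0)
    (hv : ∀ i : ℤ, 1 ≤ i → v i = 1 + 3 * ∑ j ∈ Finset.range s, v (i - 1 - j))
    (hC0 : ∀ i : ℤ, i ≤ 0 → C i = 0)
    (hCe : ∀ k : ℤ, 1 ≤ k → C (2 * k) = 2 * v k)
    (hCo : ∀ k : ℤ, 1 ≤ k → C (2 * k - 1) = v k) :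
    ∀ L : ℤ, 1 ≤ L → Odd L →
      v ((L + 1) / 2) = 1 + ∑ i ∈ Finset.Icc (L - 2 * (s : ℤ)) (L - 1), C i :=
  stmt_9_general s v C hv0 hv hC0 hCe hCo
end

section
/- Let q = 4, s ≥ 1, n ≥ 1, a ∈ Z, and let H(n,4,s,a) = { x ∈ Z4^n : ∑ v_i x_i ≡ a (mod m) } be the quaternary Helberg code with modulus m = v_{n+1}. Let φ(0)=(1,1), φ(1)=(0,1), φ(2)=(1,0), φ(3)=(0,0) extended componentwise. If x, y ∈ Z4^n are such that the binary images X = φ(x), Y = φ(y) ∈ {0,1}^{2n} have a common subsequence of length 2n − (s+1) (i.e., X^D = Y^E for some deletion index sets D, E of size s+1) and x ≠ y, then 0 < |M(x) − M(y)| < m, where M(z) = ∑_{i=1}^n v_i z_i; consequently x and y lie in different Helberg codes, and φ(H(n,4,s,a)) is an (s+1)-deletion correcting binary code. -/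
/-- The componentwise image of a quaternary word under
φ: 0↦(1,1), 1↦(0,1), 2↦(1,0), 3↦(0,0), as a binary list of length 2n. -/
def phiList {n : ℕ} (x : Fin n → Fin 4) : List ℕ :=
  (List.ofFn fun i =>
    if (x i : ℕ) = 0 then [1, 1]
    else if (x i : ℕ) = 1 then [0, 1]
    else if (x i : ℕ) = 2 then [1, 0]
    else [0, 0]).flatten

/-- The Helberg moment `M(x) = ∑_{i=1}^n v_i x_i`. -/
def moment (v : ℤ → ℕ) {n : ℕ} (x : Fin n → Fin 4) : ℤ :=
  ∑ i : Fin n, (v ((i : ℕ) + 1) : ℤ) * ((x i : ℕ) : ℤ)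


/-!
Writing `φ(c) = (b, b')` one has `c = 3 - b - 2b'`, so with the binary weights
`u (2i - 1) = v i`, `u (2i) = 2 v i` the moment is `M(x) = 3 ∑ v_i - W(φ(x))`, where `W` is the
`u`-weighted bit sum. The recurrence for `v` makes every binary weight exceed the sum of the
`s + 1` weights below it. For two binary words with a common subsequence after `s + 1` deletions,
this forces `W` to separate them (compare at the highest position where they differ) and bounds
`|W(X) - W(Y)|` by the `s + 1` largest weights, which sum to less than `u (2n + 1) = v (n + 1) = m`.
-/

namespace Helberg

/-- Weight of a word whose head carries the largest weight: the letter followed by `k` letters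
has weight `w (k + 1)`. -/
def weight (w : ℕ → ℕ) : List ℕ → ℕ
  | [] => 0
  | b :: L => b * w (L.length + 1) + weight w L

/-- Sum of the weights at positions `N, N - 1, …, N - t + 1` (read as `w 0` below position 1). -/
def topWeights (w : ℕ → ℕ) (t N : ℕ) : ℕ := ∑ j ∈ Finset.range t, w (N - j)

theorem topWeights_succ_succ (w : ℕ → ℕ) (t N : ℕ) :
    topWeights w (t + 1) (N + 1) = w (N + 1) + topWeights w t N := by
  simp [topWeights, Finset.sum_range_succ', add_comm]

theorem topWeights_mono_left (w : ℕ → ℕ) {t t' : ℕ} (h : t ≤ t') (N : ℕ) :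
    topWeights w t N ≤ topWeights w t' N :=
  Finset.sum_le_sum_of_subset (Finset.range_subset_range.2 h)

section Weights

variable {w : ℕ → ℕ}

theorem monotone_of_topWeights_lt {t : ℕ} (ht : 1 ≤ t)
    (hsep : ∀ k, topWeights w t k < w (k + 1)) : Monotone w := by
  refine monotone_nat_of_le_succ fun k => (?_ : w k ≤ topWeights w t k).trans (hsep k).le
  simpa [topWeights] using topWeights_mono_left w ht k

theorem weight_le_of_sublist (hw : Monotone w) {Z X : List ℕ} (h : Z.Sublist X) :
    weight w Z ≤ weight w X := by
  induction h with
  | slnil => exact le_rfl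
  | cons b _ ih => exact ih.trans (Nat.le_add_left _ _)
  | @cons_cons Z X a h ih =>
      have hle : w (Z.length + 1) ≤ w (X.length + 1) := hw (by simpa using h.length_le)
      have := Nat.mul_le_mul_left a hle
      simp only [weight]
      omega

theorem weight_le_add_topWeights (hw : Monotone w) {Z X : List ℕ} (hX : ∀ b ∈ X, b ≤ 1)
    (h : Z.Sublist X) {t : ℕ} (ht : X.length ≤ Z.length + t) :
    weight w X ≤ weight w Z + topWeights w t X.length := by
  induction h generalizing t with
  | slnil => exact Nat.zero_le _
  | @cons Z X b h ih =>
      have hZ := h.length_le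
      simp only [List.length_cons] at ht
      obtain ⟨t, rfl⟩ : ∃ t', t = t' + 1 := Nat.exists_eq_add_one.2 (by omega)
      have := ih (t := t) (fun c hc => hX c (by simp [hc])) (by omega)
      have hb : b * w (X.length + 1) ≤ w (X.length + 1) :=
        mul_le_of_le_one_left (Nat.zero_le _) (hX b (by simp))
      simp only [weight, List.length_cons, topWeights_succ_succ]
      omega
  | @cons_cons Z X a h ih =>
      simp only [List.length_cons] at ht
      have ih := ih (t := t) (fun c hc => hX c (by simp [hc])) (by omega)
      have hshift : w (X.length + 1) + topWeights w t X.length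
          = topWeights w t (X.length + 1) + w (X.length + 1 - t) := by
        rw [← topWeights_succ_succ, topWeights, Finset.sum_range_succ]; rfl
      have hlow : w (X.length + 1 - t) ≤ w (Z.length + 1) := hw (by omega)
      have hN : topWeights w t X.length ≤ topWeights w t (X.length + 1) :=
        Finset.sum_le_sum fun j _ => hw (by omega)
      simp only [weight, List.length_cons]
      rcases Nat.le_one_iff_eq_zero_or_eq_one.1 (hX a (by simp)) with rfl | rfl <;> omega

theorem weight_le_weight_add_topWeights (hw : Monotone w) {X Y Z : List ℕ}
    (hX : ∀ b ∈ X, b ≤ 1) (hZX : Z.Sublist X) (hZY : Z.Sublist Y) {t : ℕ}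
    (ht : X.length ≤ Z.length + t) :
    weight w X ≤ weight w Y + topWeights w t X.length :=
  (weight_le_add_topWeights hw hX hZX ht).trans
    (Nat.add_le_add_right (weight_le_of_sublist hw hZY) _)

theorem eq_of_weight_eq (hw : Monotone w) {t : ℕ} (hsep : ∀ k, topWeights w t k < w (k + 1))
    {X Y Z : List ℕ} (hX : ∀ b ∈ X, b ≤ 1) (hY : ∀ b ∈ Y, b ≤ 1)
    (hlen : X.length = Y.length) (hZX : Z.Sublist X) (hZY : Z.Sublist Y)
    (ht : X.length ≤ Z.length + t) (h : weight w X = weight w Y) : X = Y := by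
  induction X generalizing Y Z with
  | nil => exact (List.length_eq_zero_iff.1 hlen.symm).symm
  | cons a X ih =>
      obtain _ | ⟨b, Y⟩ := Y
      · simp at hlen
      simp only [List.length_cons, add_left_inj] at hlen ht
      have hX' : ∀ c ∈ X, c ≤ 1 := fun c hc => hX c (by simp [hc])
      have hY' : ∀ c ∈ Y, c ≤ 1 := fun c hc => hY c (by simp [hc])
      have hZX' : Z.tail.Sublist X := hZX.tail
      have hZY' : Z.tail.Sublist Y := hZY.tail
      have ht' : X.length ≤ Z.tail.length + t := by simp; omega
      have hXY := weight_le_weight_add_topWeights hw hX' hZX' hZY' ht'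
      have hYX := weight_le_weight_add_topWeights hw hY' hZY' hZX' (hlen ▸ ht')
      have hgap := hsep X.length
      simp only [weight, hlen] at h hXY hYX hgap ⊢
      have hab : a = b := by
        rcases Nat.le_one_iff_eq_zero_or_eq_one.1 (hX a (by simp)) with rfl | rfl <;>
        rcases Nat.le_one_iff_eq_zero_or_eq_one.1 (hY b (by simp)) with rfl | rfl <;> omega
      subst hab
      rw [ih hX' hY' hlen hZX' hZY' ht' (by omega)]

end Weights

/-- Weights of the binary image: the two bits of the `i`-th quaternary letter sit at positions
`2i - 1` and `2i` and carry `v i` and `2 v i`. -/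
def binWeight (v : ℤ → ℕ) (k : ℕ) : ℕ :=
  if k % 2 = 1 then v ((k + 1) / 2 : ℕ) else 2 * v (k / 2 : ℕ)

theorem binWeight_two_mul_add_one (v : ℤ → ℕ) (i : ℕ) : binWeight v (2 * i + 1) = v (i + 1) := by
  rw [binWeight, if_pos (by omega), show (2 * i + 1 + 1) / 2 = i + 1 by omega]
  push_cast; rfl

theorem binWeight_two_mul (v : ℤ → ℕ) (i : ℕ) : binWeight v (2 * i) = 2 * v i := by
  rw [binWeight, if_neg (by omega), show 2 * i / 2 = i by omega]

theorem binWeight_two_mul_add_two (v : ℤ → ℕ) (i : ℕ) :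
    binWeight v (2 * i + 2) = 2 * v (i + 1) := by
  rw [show 2 * i + 2 = 2 * (i + 1) by ring, binWeight_two_mul]; push_cast; rfl

section Recurrence

variable {v : ℤ → ℕ} {s : ℕ}

theorem binWeight_pair (hv0 : ∀ i : ℤ, i ≤ 0 → v i = 0) (i a : ℕ) :
    binWeight v (2 * i - 2 * a) + binWeight v (2 * i - (2 * a + 1)) = 3 * v (i - a) := by
  rcases lt_or_ge a i with h | h
  · obtain ⟨d, rfl⟩ := Nat.exists_eq_add_of_lt h
    rw [show 2 * (a + d + 1) - 2 * a = 2 * (d + 1) by omega,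
      show 2 * (a + d + 1) - (2 * a + 1) = 2 * d + 1 by omega,
      binWeight_two_mul, binWeight_two_mul_add_one,
      show ((a + d + 1 : ℕ) : ℤ) - a = d + 1 by push_cast; ring]
    push_cast; ring
  · rw [Nat.sub_eq_zero_of_le (by omega), Nat.sub_eq_zero_of_le (by omega),
      show 0 = 2 * 0 from rfl, binWeight_two_mul, hv0 (i - a) (by omega)]
    simp [hv0]

theorem topWeights_binWeight (hv0 : ∀ i : ℤ, i ≤ 0 → v i = 0) (t i : ℕ) :
    topWeights (binWeight v) (2 * t) (2 * i) = 3 * ∑ a ∈ Finset.range t, v (i - a) := by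
  induction t with
  | zero => rfl
  | succ t ih =>
      rw [show 2 * (t + 1) = 2 * t + 1 + 1 by ring, topWeights, Finset.sum_range_succ,
        Finset.sum_range_succ, ← topWeights, ih, Finset.sum_range_succ, mul_add,
        ← binWeight_pair hv0]
      ring

theorem topWeights_binWeight_lt (hs : 1 ≤ s) (hv0 : ∀ i : ℤ, i ≤ 0 → v i = 0)
    (hv : ∀ i : ℤ, 1 ≤ i → v i = 1 + 3 * ∑ j ∈ Finset.range s, v (i - 1 - j)) (k : ℕ) :
    topWeights (binWeight v) (s + 1) k < binWeight v (k + 1) := by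
  have hrec (i : ℕ) : v (i + 1) = 1 + topWeights (binWeight v) (2 * s) (2 * i) := by
    rw [topWeights_binWeight hv0, hv _ (by omega)]
    simp only [add_sub_cancel_right]
  rcases Nat.even_or_odd' k with ⟨i, rfl | rfl⟩
  · have := topWeights_mono_left (binWeight v) (show s + 1 ≤ 2 * s by omega) (2 * i)
    rw [binWeight_two_mul_add_one, hrec]
    omega
  · have := topWeights_mono_left (binWeight v) (show s ≤ 2 * s by omega) (2 * i)
    rw [topWeights_succ_succ, binWeight_two_mul_add_one, binWeight_two_mul_add_two, hrec]
    omega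

end Recurrence

def phiBlock (c : Fin 4) : List ℕ :=
  if (c : ℕ) = 0 then [1, 1] else if (c : ℕ) = 1 then [0, 1] else if (c : ℕ) = 2 then [1, 0]
  else [0, 0]

theorem phiBlock_injective : Function.Injective phiBlock := by decide

theorem phiBlock_length (c : Fin 4) : (phiBlock c).length = 2 := by
  fin_cases c <;> rfl

theorem phiBlock_reverse (c : Fin 4) :
    ∃ p q, (phiBlock c).reverse = [p, q] ∧ p ≤ 1 ∧ q ≤ 1 ∧ (c : ℕ) + 2 * p + q = 3 := by
  fin_cases c <;> simp [phiBlock]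

theorem phiList_succ {n : ℕ} (x : Fin (n + 1) → Fin 4) :
    phiList x = phiList (Fin.init x) ++ phiBlock (x (Fin.last n)) := by
  simp only [phiList, List.ofFn_succ', List.concat_eq_append, List.flatten_append,
    List.flatten_singleton]
  rfl

theorem phiList_length {n : ℕ} (x : Fin n → Fin 4) : (phiList x).length = 2 * n := by
  induction n with
  | zero => rfl
  | succ n ih =>
      rw [phiList_succ, List.length_append, ih, phiBlock_length, mul_add_one]

theorem le_one_of_mem_phiList {n : ℕ} (x : Fin n → Fin 4) : ∀ b ∈ phiList x, b ≤ 1 := by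
  simp only [phiList, List.mem_flatten, List.mem_ofFn]
  rintro b ⟨_, ⟨i, rfl⟩, hb⟩
  split_ifs at hb <;> simp at hb <;> omega

theorem phiList_injective (n : ℕ) : Function.Injective (phiList (n := n)) := by
  induction n with
  | zero => intro x y _; exact funext fun i => i.elim0
  | succ n ih =>
      intro x y h
      rw [phiList_succ, phiList_succ] at h
      obtain ⟨hinit, hlast⟩ := List.append_inj h (by rw [phiList_length, phiList_length])
      rw [← Fin.snoc_init_self x, ← Fin.snoc_init_self y, ih hinit, phiBlock_injective hlast]

theorem moment_succ (v : ℤ → ℕ) {n : ℕ} (x : Fin (n + 1) → Fin 4) :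
    moment v x = moment v (Fin.init x) + v (n + 1) * (x (Fin.last n) : ℕ) := by
  simp only [moment, Fin.sum_univ_castSucc, Fin.val_castSucc, Fin.val_last]
  rfl

theorem moment_add_weight_phiList (v : ℤ → ℕ) {n : ℕ} (x : Fin n → Fin 4) :
    moment v x + weight (binWeight v) (phiList x).reverse
      = 3 * ∑ i ∈ Finset.range n, (v (i + 1) : ℤ) := by
  induction n with
  | zero => simp [moment, phiList, weight]
  | succ n ih =>
      obtain ⟨p, q, hpq, -, -, hc⟩ := phiBlock_reverse (x (Fin.last n))
      have hR : (phiList (Fin.init x)).reverse.length = 2 * n := by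
        rw [List.length_reverse, phiList_length]
      rw [moment_succ, phiList_succ, List.reverse_append, hpq, Finset.sum_range_succ, mul_add,
        ← ih]
      simp only [List.cons_append, List.nil_append, weight, List.length_cons, hR,
        binWeight_two_mul_add_one, show 2 * n + 1 + 1 = 2 * n + 2 from rfl,
        binWeight_two_mul_add_two]
      have hc' : ((x (Fin.last n) : ℕ) : ℤ) = 3 - 2 * p - q := by omega
      push_cast [hc']
      ring

theorem moment_sub_moment (v : ℤ → ℕ) {n : ℕ} (x y : Fin n → Fin 4) :
    moment v x - moment v y
      = weight (binWeight v) (phiList y).reverse - weight (binWeight v) (phiList x).reverse := by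
  linear_combination moment_add_weight_phiList v x - moment_add_weight_phiList v y

theorem abs_moment_sub_pos_and_lt {v : ℤ → ℕ} {s : ℕ} (hs : 1 ≤ s)
    (hv0 : ∀ i : ℤ, i ≤ 0 → v i = 0)
    (hv : ∀ i : ℤ, 1 ≤ i → v i = 1 + 3 * ∑ j ∈ Finset.range s, v (i - 1 - j))
    {n : ℕ} {x y : Fin n → Fin 4} (hxy : x ≠ y) {w : List ℕ} (hw : w.length + (s + 1) = 2 * n)
    (hwx : w.Sublist (phiList x)) (hwy : w.Sublist (phiList y)) :
    0 < |moment v x - moment v y| ∧ |moment v x - moment v y| < v (n + 1) := by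
  have hsep := topWeights_binWeight_lt hs hv0 hv
  have hmono := monotone_of_topWeights_lt (Nat.le_add_left 1 s) hsep
  have hX : ∀ b ∈ (phiList x).reverse, b ≤ 1 := fun b hb =>
    le_one_of_mem_phiList x b (List.mem_reverse.1 hb)
  have hY : ∀ b ∈ (phiList y).reverse, b ≤ 1 := fun b hb =>
    le_one_of_mem_phiList y b (List.mem_reverse.1 hb)
  have hlenX : (phiList x).reverse.length = 2 * n := by rw [List.length_reverse, phiList_length]
  have hlenY : (phiList y).reverse.length = 2 * n := by rw [List.length_reverse, phiList_length]
  have htX : (phiList x).reverse.length ≤ w.reverse.length + (s + 1) := by simp [hlenX, ← hw]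
  have htY : (phiList y).reverse.length ≤ w.reverse.length + (s + 1) := by simp [hlenY, ← hw]
  have hne : weight (binWeight v) (phiList x).reverse ≠ weight (binWeight v) (phiList y).reverse :=
    fun h => hxy <| phiList_injective n <| List.reverse_injective <|
      eq_of_weight_eq hmono hsep hX hY (hlenX.trans hlenY.symm) hwx.reverse hwy.reverse htX h
  have hXY := weight_le_weight_add_topWeights hmono hX hwx.reverse hwy.reverse htX
  have hYX := weight_le_weight_add_topWeights hmono hY hwy.reverse hwx.reverse htY
  have hgap := hsep (2 * n)
  rw [hlenX] at hXY
  rw [hlenY] at hYX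
  rw [binWeight_two_mul_add_one] at hgap
  rw [moment_sub_moment, abs_pos, sub_ne_zero, abs_sub_lt_iff]
  omega

end Helberg

open Helberg in
theorem stmt_19_general (s n : ℕ) (hs : 1 ≤ s) (v : ℤ → ℕ)
    (hv0 : ∀ i : ℤ, i ≤ 0 → v i = 0)
    (hv : ∀ i : ℤ, 1 ≤ i → v i = 1 + 3 * ∑ j ∈ Finset.range s, v (i - 1 - j)) :
    (∀ x y : Fin n → Fin 4, x ≠ y →
      (∃ w : List ℕ, w.length + (s + 1) = 2 * n ∧
          w.Sublist (phiList x) ∧ w.Sublist (phiList y)) →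
      0 < |moment v x - moment v y| ∧
        |moment v x - moment v y| < (v ((n : ℤ) + 1) : ℤ) ∧
        ¬ (moment v x ≡ moment v y [ZMOD (v ((n : ℤ) + 1) : ℤ)])) ∧
    (∀ a : ℤ, ∀ x y : Fin n → Fin 4,
      moment v x ≡ a [ZMOD (v ((n : ℤ) + 1) : ℤ)] →
      moment v y ≡ a [ZMOD (v ((n : ℤ) + 1) : ℤ)] →
      phiList x ≠ phiList y →
      ¬ ∃ w : List ℕ, w.length + (s + 1) = 2 * n ∧
          w.Sublist (phiList x) ∧ w.Sublist (phiList y)) := by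
  have not_modEq {x y : Fin n → Fin 4} (hpos : 0 < |moment v x - moment v y|)
      (hlt : |moment v x - moment v y| < v ((n : ℤ) + 1)) :
      ¬ moment v x ≡ moment v y [ZMOD v ((n : ℤ) + 1)] := fun hmod =>
    hpos.ne' (abs_eq_zero.2 (Int.eq_zero_of_abs_lt_dvd hmod.symm.dvd hlt))
  refine ⟨fun x y hxy ⟨w, hw, hwx, hwy⟩ => ?_, fun a x y hx hy hne ⟨w, hw, hwx, hwy⟩ => ?_⟩
  · obtain ⟨hpos, hlt⟩ := abs_moment_sub_pos_and_lt hs hv0 hv hxy hw hwx hwy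
    exact ⟨hpos, hlt, not_modEq hpos hlt⟩
  · obtain ⟨hpos, hlt⟩ :=
      abs_moment_sub_pos_and_lt hs hv0 hv (ne_of_apply_ne phiList hne) hw hwx hwy
    exact not_modEq hpos hlt (hx.trans hy.symm)

theorem stmt_19 (s n : ℕ) (hs : 1 ≤ s) (hn : 1 ≤ n) (v : ℤ → ℕ)
    (hv0 : ∀ i : ℤ, i ≤ 0 → v i = 0)
    (hv : ∀ i : ℤ, 1 ≤ i → v i = 1 + 3 * ∑ j ∈ Finset.range s, v (i - 1 - j)) :
    (∀ x y : Fin n → Fin 4, x ≠ y →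
      (∃ w : List ℕ, w.length + (s + 1) = 2 * n ∧
          w.Sublist (phiList x) ∧ w.Sublist (phiList y)) →
      0 < |moment v x - moment v y| ∧
        |moment v x - moment v y| < (v ((n : ℤ) + 1) : ℤ) ∧
        ¬ (moment v x ≡ moment v y [ZMOD (v ((n : ℤ) + 1) : ℤ)])) ∧
    (∀ a : ℤ, ∀ x y : Fin n → Fin 4,
      moment v x ≡ a [ZMOD (v ((n : ℤ) + 1) : ℤ)] →
      moment v y ≡ a [ZMOD (v ((n : ℤ) + 1) : ℤ)] →
      phiList x ≠ phiList y →
      ¬ ∃ w : List ℕ, w.length + (s + 1) = 2 * n ∧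
          w.Sublist (phiList x) ∧ w.Sublist (phiList y)) :=
  stmt_19_general s n hs v hv0 hv
end
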